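/- For every γ ∈ (0, D*) and k ∈ ℤ⁺, every pair (E₁,E₂) ∈ ([0,E₁(γ)] × [0,E₂(γ)]) ∩ ((γ,γ) + k·R_FD) is achievable by the class of two-phase tests; that is, for every δ > 0 and all sufficiently large n there is a choice of parameters λ₁, λ₂, λ of the two-phase test such that P₁(A₂^τ) ≤ e^{−(E₁−δ)n} and P₂(A₁^τ) ≤ e^{−(E₂−δ)n}. -/

import Mathlib

open Real Filter Finset MeasureTheory
open scoped Classical

variable {𝒳 : Type*} [Fintype 𝒳] [DecidableEq 𝒳] [Nonempty 𝒳]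

/-- Kullback–Leibler divergence `D(Q‖P)` between pmfs on a finite alphabet. -/
noncomputable def kl (Q P : 𝒳 → ℝ) : ℝ :=
  ∑ x, Q x * Real.log (Q x / P x)

/-- The `λ`-tilted distribution `P^(λ)` of `P₁` and `P₂`. -/
noncomputable def tilt (P₁ P₂ : 𝒳 → ℝ) (l : ℝ) : 𝒳 → ℝ :=
  fun x => P₁ x ^ (1 - l) * P₂ x ^ l / ∑ a, P₁ a ^ (1 - l) * P₂ a ^ l

/-- Probability of a set of length-`N` sample paths under i.i.d. sampling from `P`. -/
noncomputable def prodProb (P : 𝒳 → ℝ) {N : ℕ} (S : Set (Fin N → 𝒳)) : ℝ :=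
  ∑ ω : Fin N → 𝒳, S.indicator (fun ω' => ∏ i, P (ω' i)) ω

/-- The fixed-length error-exponent region `R_FD`. -/
def RFD (P₁ P₂ : 𝒳 → ℝ) : Set (ℝ × ℝ) :=
  {p | 0 ≤ p.1 ∧ 0 ≤ p.2 ∧
    ∃ l ∈ Set.Icc (0:ℝ) 1,
      p.1 ≤ kl (tilt P₁ P₂ l) P₁ ∧ p.2 ≤ kl (tilt P₁ P₂ l) P₂}

/-- `E₁(γ) = max{D(P^(λ)‖P₁) : λ ∈ [0,1], D(P^(λ)‖P₂) ≥ γ}` (sup of the empty set is 0). -/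
noncomputable def E1exp (P₁ P₂ : 𝒳 → ℝ) (γ : ℝ) : ℝ :=
  sSup {E | ∃ l ∈ Set.Icc (0:ℝ) 1, γ ≤ kl (tilt P₁ P₂ l) P₂ ∧ E = kl (tilt P₁ P₂ l) P₁}

/-- `E₂(γ) = max{D(P^(λ)‖P₂) : λ ∈ [0,1], D(P^(λ)‖P₁) ≥ γ}` (sup of the empty set is 0). -/
noncomputable def E2exp (P₁ P₂ : 𝒳 → ℝ) (γ : ℝ) : ℝ :=
  sSup {E | ∃ l ∈ Set.Icc (0:ℝ) 1, γ ≤ kl (tilt P₁ P₂ l) P₁ ∧ E = kl (tilt P₁ P₂ l) P₂}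

/-- A sequential hypothesis test whose stopping time is bounded by `N`:
a stopping time `τ` for the coordinate filtration, together with decision events
`A1`, `A2` that are determined by the samples observed up to time `τ`,
are disjoint, and exhaust the sample space. -/
structure HypTest (𝒳 : Type*) (N : ℕ) where
  τ : (Fin N → 𝒳) → ℕ
  A1 : Set (Fin N → 𝒳)
  A2 : Set (Fin N → 𝒳)
  tau_le : ∀ ω, τ ω ≤ N
  stopping : ∀ ω ω', (∀ i : Fin N, (i : ℕ) < τ ω → ω i = ω' i) → τ ω' = τ ω
  adapted1 : ∀ ω ω', (∀ i : Fin N, (i : ℕ) < τ ω → ω i = ω' i) → (ω ∈ A1 ↔ ω' ∈ A1)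
  adapted2 : ∀ ω ω', (∀ i : Fin N, (i : ℕ) < τ ω → ω i = ω' i) → (ω ∈ A2 ↔ ω' ∈ A2)
  disj : Disjoint A1 A2
  exhaust : A1 ∪ A2 = Set.univ

/-- `(E₁, E₂)` is achievable by `γ`-almost-fixed-length tests. -/
def AFLAchievable (P₁ P₂ : 𝒳 → ℝ) (γ E₁ E₂ : ℝ) : Prop :=
  0 ≤ E₁ ∧ 0 ≤ E₂ ∧
  ∃ c : ℝ, 0 < c ∧ ∃ l : ℕ, 0 < l ∧
    ∀ δ : ℝ, 0 < δ → ∃ n₀ : ℕ, ∀ n : ℕ, n₀ ≤ n →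
      ∃ N : ℕ, (N : ℝ) ≤ c * (n : ℝ) ^ l ∧
        ∃ T : HypTest 𝒳 N,
          prodProb P₁ {ω | n < T.τ ω} ≤ Real.exp (-(γ * n)) ∧
          prodProb P₂ {ω | n < T.τ ω} ≤ Real.exp (-(γ * n)) ∧
          prodProb P₁ T.A2 ≤ Real.exp (-((E₁ - δ) * n)) ∧
          prodProb P₂ T.A1 ≤ Real.exp (-((E₂ - δ) * n))

/-- `(E₁, E₂, E_Ω)` is achievable by fixed-length tests with a rejection option. -/
def RejAchievable (P₁ P₂ : 𝒳 → ℝ) (E₁ E₂ EΩ : ℝ) : Prop :=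
  0 ≤ E₁ ∧ 0 ≤ E₂ ∧ 0 ≤ EΩ ∧
  ∀ δ : ℝ, 0 < δ → ∃ n₀ : ℕ, ∀ n : ℕ, n₀ ≤ n →
    ∃ A1 A2 AΩ : Set (Fin n → 𝒳),
      Disjoint A1 A2 ∧ Disjoint A1 AΩ ∧ Disjoint A2 AΩ ∧ A1 ∪ A2 ∪ AΩ = Set.univ ∧
      prodProb P₁ A2 ≤ Real.exp (-((E₁ - δ) * n)) ∧
      prodProb P₂ A1 ≤ Real.exp (-((E₂ - δ) * n)) ∧
      prodProb P₁ AΩ + prodProb P₂ AΩ ≤ Real.exp (-((EΩ - δ) * n))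

/-- Sum of the log-likelihood ratios of the first `n` samples. -/
noncomputable def S1 (P₁ P₂ : 𝒳 → ℝ) (n : ℕ) {N : ℕ} (ω : Fin N → 𝒳) : ℝ :=
  ∑ i ∈ Finset.univ.filter (fun i : Fin N => (i : ℕ) < n),
    Real.log (P₁ (ω i) / P₂ (ω i))

/-- Sum of the log-likelihood ratios of the samples after time `n`. -/
noncomputable def S2 (P₁ P₂ : 𝒳 → ℝ) (n : ℕ) {N : ℕ} (ω : Fin N → 𝒳) : ℝ :=
  ∑ i ∈ Finset.univ.filter (fun i : Fin N => n ≤ (i : ℕ)),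
    Real.log (P₁ (ω i) / P₂ (ω i))

/-- Event that the two-phase test (phase-one thresholds `α₁ > β₁`, phase-two threshold `α`)
chooses `H₁`. -/
def twoPhaseA1 (P₁ P₂ : 𝒳 → ℝ) (k n : ℕ) (α₁ β₁ α : ℝ) : Set (Fin ((k + 1) * n) → 𝒳) :=
  {ω | α₁ ≤ S1 P₁ P₂ n ω / n ∨
    (β₁ < S1 P₁ P₂ n ω / n ∧ S1 P₁ P₂ n ω / n < α₁ ∧ α ≤ S2 P₁ P₂ n ω / (k * n))}

/-- Event that the two-phase test chooses `H₂`. -/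
def twoPhaseA2 (P₁ P₂ : 𝒳 → ℝ) (k n : ℕ) (α₁ β₁ α : ℝ) : Set (Fin ((k + 1) * n) → 𝒳) :=
  {ω | S1 P₁ P₂ n ω / n ≤ β₁ ∨
    (β₁ < S1 P₁ P₂ n ω / n ∧ S1 P₁ P₂ n ω / n < α₁ ∧ S2 P₁ P₂ n ω / (k * n) < α)}

/-- Stopping time of the two-phase test: `n` if phase one is decisive, `(k+1)n` otherwise. -/
noncomputable def twoPhaseTau (P₁ P₂ : 𝒳 → ℝ) (k n : ℕ) (α₁ β₁ : ℝ)
    (ω : Fin ((k + 1) * n) → 𝒳) : ℕ :=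
  if β₁ < S1 P₁ P₂ n ω / n ∧ S1 P₁ P₂ n ω / n < α₁ then (k + 1) * n else n

/-!
Let `μ(λ)` be the mean of `log (P₁/P₂)` under `P^(λ)` and `Z(λ) = ∑ P₁^(1-λ) P₂^λ`. Then
`D(P^(λ)‖P₁) = -λ μ(λ) - log Z(λ)` and `D(P^(λ)‖P₂) = D(P^(λ)‖P₁) + μ(λ)`; since `μ' = -Var < 0`,
the first divergence increases from `0` and the second decreases to `0` on `[0,1]`. Hence there
are `λ₂ ≤ λ* ≤ λ₁` with `D(P^(λ₂)‖P₁) = D(P^(λ₁)‖P₂) = γ`, and monotonicity gives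
`E₁(γ) ≤ D(P^(λ₁)‖P₁)`, `E₂(γ) ≤ D(P^(λ₂)‖P₂)`. With these parameters the thresholds are
`α₁ = μ(λ₂)`, `β₁ = μ(λ₁)`, `α = μ(λ)`. Wrongly choosing `H₂` means either stopping with
`S₁ ≤ n μ(λ₁)`, which the Chernoff bound with tilt `λ₁` makes `≤ e^{-n D(P^(λ₁)‖P₁)}`, or
continuing with `S₁ < n μ(λ₂)` and `S₂ < kn μ(λ)`, which the Chernoff bound with tilts `λ₂`
and `λ` on the two blocks makes `≤ e^{-n (γ + k D(P^(λ)‖P₁))}`; symmetrically for `H₁`.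
The factor `2` of the union bound is absorbed by `δ` once `n δ ≥ log 2`.
-/

section TiltedMoments

variable {α : Type*} [Fintype α] (P g : α → ℝ)

noncomputable def tiltedMoment (j : ℕ) (l : ℝ) : ℝ :=
  ∑ x, P x * g x ^ j * exp (-(l * g x))

noncomputable def tiltedMean (l : ℝ) : ℝ :=
  tiltedMoment P g 1 l / tiltedMoment P g 0 l

noncomputable def tiltedVar (l : ℝ) : ℝ :=
  tiltedMoment P g 2 l / tiltedMoment P g 0 l - tiltedMean P g l ^ 2

variable {P g}

lemma tiltedMoment_zero (l : ℝ) : tiltedMoment P g 0 l = ∑ x, P x * exp (-(l * g x)) := by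
  simp [tiltedMoment]

lemma tiltedMoment_zero_pos [Nonempty α] (hP : ∀ x, 0 < P x) (l : ℝ) :
    0 < tiltedMoment P g 0 l :=
  tiltedMoment_zero (g := g) l ▸
    Finset.sum_pos (fun x _ => mul_pos (hP x) (exp_pos _)) univ_nonempty

lemma hasDerivAt_tiltedMoment (j : ℕ) (l : ℝ) :
    HasDerivAt (tiltedMoment P g j) (-tiltedMoment P g (j + 1) l) l := by
  unfold tiltedMoment
  rw [← Finset.sum_neg_distrib]
  refine HasDerivAt.fun_sum fun x _ => ?_
  have := ((hasDerivAt_mul_const (g x)).fun_neg.exp).const_mul (P x * g x ^ j) (x := l)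
  exact this.congr_deriv (by ring)

lemma hasDerivAt_tiltedMean [Nonempty α] (hP : ∀ x, 0 < P x) (l : ℝ) :
    HasDerivAt (tiltedMean P g) (-tiltedVar P g l) l := by
  have hZ := (tiltedMoment_zero_pos (g := g) hP l).ne'
  refine ((hasDerivAt_tiltedMoment 1 l).div (hasDerivAt_tiltedMoment 0 l) hZ).congr_deriv ?_
  simp only [tiltedVar, tiltedMean, zero_add]
  field_simp
  ring

lemma tiltedVar_eq_sum_sq [Nonempty α] (hP : ∀ x, 0 < P x) (l : ℝ) :
    tiltedVar P g l =
      (∑ x, P x * exp (-(l * g x)) * (g x - tiltedMean P g l) ^ 2) / tiltedMoment P g 0 l := by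
  have hZ := (tiltedMoment_zero_pos (g := g) hP l).ne'
  have expand : ∑ x, P x * exp (-(l * g x)) * (g x - tiltedMean P g l) ^ 2 =
      tiltedMoment P g 2 l - 2 * tiltedMean P g l * tiltedMoment P g 1 l +
        tiltedMean P g l ^ 2 * tiltedMoment P g 0 l := by
    simp only [tiltedMoment, Finset.mul_sum, ← Finset.sum_sub_distrib, ← Finset.sum_add_distrib]
    exact Finset.sum_congr rfl fun x _ => by ring
  rw [expand, tiltedVar, tiltedMean]
  field_simp
  ring

lemma tiltedVar_pos [Nonempty α] (hP : ∀ x, 0 < P x) (hg : ∃ x y, g x ≠ g y) (l : ℝ) :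
    0 < tiltedVar P g l := by
  obtain ⟨x, y, hxy⟩ := hg
  obtain ⟨z, hz⟩ : ∃ z, g z ≠ tiltedMean P g l := by
    by_contra! h
    exact hxy ((h x).trans (h y).symm)
  have hz' := sub_ne_zero.2 hz
  rw [tiltedVar_eq_sum_sq hP]
  refine div_pos (Finset.sum_pos' (fun x _ => ?_) ⟨z, mem_univ _, ?_⟩) (tiltedMoment_zero_pos hP l)
  · have := hP x
    positivity
  · have := hP z
    positivity

end TiltedMoments

lemma rpow_one_sub_mul_rpow_eq {a b : ℝ} (ha : 0 < a) (hb : 0 < b) (l : ℝ) :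
    a ^ (1 - l) * b ^ l = a * exp (-(l * log (a / b))) := by
  rw [rpow_def_of_pos ha, rpow_def_of_pos hb, ← exp_add, log_div ha.ne' hb.ne']
  conv_rhs => enter [1]; rw [← exp_log ha]
  rw [← exp_add]
  ring_nf

lemma pow_eq_exp_mul_log {a : ℝ} (ha : 0 < a) (m : ℕ) : a ^ m = exp (m * log a) := by
  rw [exp_nat_mul, exp_log ha]

noncomputable def logRatio {α : Type*} (P₁ P₂ : α → ℝ) (x : α) : ℝ := log (P₁ x / P₂ x)

section TiltedFamily

variable {α : Type*} [Fintype α] {P₁ P₂ : α → ℝ}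

lemma exists_logRatio_ne (h₁ : ∀ x, 0 < P₁ x) (h₂ : ∀ x, 0 < P₂ x)
    (h₁sum : ∑ x, P₁ x = 1) (h₂sum : ∑ x, P₂ x = 1) (hne : P₁ ≠ P₂) :
    ∃ x y, logRatio P₁ P₂ x ≠ logRatio P₁ P₂ y := by
  by_contra! hconst
  refine hne (funext fun x => ?_)
  have hprop : ∀ y, P₁ y = exp (logRatio P₁ P₂ x) * P₂ y := fun y => by
    rw [← hconst y x, logRatio, exp_log (div_pos (h₁ y) (h₂ y)), div_mul_cancel₀ _ (h₂ y).ne']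
  have hc := Finset.sum_congr rfl fun y (_ : y ∈ univ) => hprop y
  rw [← Finset.mul_sum, h₁sum, h₂sum, mul_one] at hc
  rw [hprop x, ← hc, one_mul]

lemma tilt_eq (h₁ : ∀ x, 0 < P₁ x) (h₂ : ∀ x, 0 < P₂ x) (l : ℝ) (x : α) :
    tilt P₁ P₂ l x =
      P₁ x * exp (-(l * logRatio P₁ P₂ x)) / tiltedMoment P₁ (logRatio P₁ P₂) 0 l := by
  simp only [tilt, tiltedMoment_zero, logRatio, rpow_one_sub_mul_rpow_eq (h₁ _) (h₂ _)]

lemma tilt_zero (h₁sum : ∑ x, P₁ x = 1) : tilt P₁ P₂ 0 = P₁ := by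
  funext x
  simp [tilt, h₁sum]

lemma tilt_one (h₂sum : ∑ x, P₂ x = 1) : tilt P₁ P₂ 1 = P₂ := by
  funext x
  simp [tilt, h₂sum]

lemma kl_self (P : α → ℝ) : kl P P = 0 := by
  simp [kl]

lemma kl_tilt_zero_left (h₁sum : ∑ x, P₁ x = 1) : kl (tilt P₁ P₂ 0) P₁ = 0 := by
  rw [tilt_zero h₁sum, kl_self]

lemma kl_tilt_one_right (h₂sum : ∑ x, P₂ x = 1) : kl (tilt P₁ P₂ 1) P₂ = 0 := by
  rw [tilt_one h₂sum, kl_self]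

lemma sum_tilt [Nonempty α] (h₁ : ∀ x, 0 < P₁ x) (h₂ : ∀ x, 0 < P₂ x) (l : ℝ) :
    ∑ x, tilt P₁ P₂ l x = 1 := by
  simp only [tilt_eq h₁ h₂, ← Finset.sum_div]
  rw [← tiltedMoment_zero, div_self (tiltedMoment_zero_pos h₁ l).ne']

lemma tilt_pos [Nonempty α] (h₁ : ∀ x, 0 < P₁ x) (h₂ : ∀ x, 0 < P₂ x) (l : ℝ) (x : α) :
    0 < tilt P₁ P₂ l x := by
  rw [tilt_eq h₁ h₂]
  exact div_pos (mul_pos (h₁ x) (exp_pos _)) (tiltedMoment_zero_pos h₁ l)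

lemma sum_tilt_mul_logRatio (h₁ : ∀ x, 0 < P₁ x) (h₂ : ∀ x, 0 < P₂ x) (l : ℝ) :
    ∑ x, tilt P₁ P₂ l x * logRatio P₁ P₂ x = tiltedMean P₁ (logRatio P₁ P₂) l := by
  simp only [tilt_eq h₁ h₂, tiltedMean, tiltedMoment, Finset.sum_div, pow_one]
  exact Finset.sum_congr rfl fun x _ => by ring

lemma kl_tilt_left [Nonempty α] (h₁ : ∀ x, 0 < P₁ x) (h₂ : ∀ x, 0 < P₂ x) (l : ℝ) :
    kl (tilt P₁ P₂ l) P₁ =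
      -(l * tiltedMean P₁ (logRatio P₁ P₂) l) - log (tiltedMoment P₁ (logRatio P₁ P₂) 0 l) := by
  have hZ := tiltedMoment_zero_pos (g := logRatio P₁ P₂) h₁ l
  have hlog : ∀ x, log (tilt P₁ P₂ l x / P₁ x) =
      -(l * logRatio P₁ P₂ x) - log (tiltedMoment P₁ (logRatio P₁ P₂) 0 l) := fun x => by
    rw [tilt_eq h₁ h₂, div_right_comm, mul_div_cancel_left₀ _ (h₁ x).ne',
      log_div (exp_pos _).ne' hZ.ne', log_exp]
  have hterm : ∀ x, tilt P₁ P₂ l x * log (tilt P₁ P₂ l x / P₁ x) =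
      -l * (tilt P₁ P₂ l x * logRatio P₁ P₂ x) -
        log (tiltedMoment P₁ (logRatio P₁ P₂) 0 l) * tilt P₁ P₂ l x := fun x => by
    rw [hlog]; ring
  simp only [kl, hterm, Finset.sum_sub_distrib, ← Finset.mul_sum, sum_tilt h₁ h₂,
    sum_tilt_mul_logRatio h₁ h₂]
  ring

lemma kl_tilt_right [Nonempty α] (h₁ : ∀ x, 0 < P₁ x) (h₂ : ∀ x, 0 < P₂ x) (l : ℝ) :
    kl (tilt P₁ P₂ l) P₂ = kl (tilt P₁ P₂ l) P₁ + tiltedMean P₁ (logRatio P₁ P₂) l := by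
  have hlog : ∀ x, log (tilt P₁ P₂ l x / P₂ x) =
      log (tilt P₁ P₂ l x / P₁ x) + logRatio P₁ P₂ x := fun x => by
    have ht : 0 < tilt P₁ P₂ l x := tilt_pos h₁ h₂ l x
    rw [logRatio, ← log_mul (div_pos ht (h₁ x)).ne' (div_pos (h₁ x) (h₂ x)).ne',
      div_mul_div_cancel₀ (h₁ x).ne']
  simp only [kl, hlog, mul_add, Finset.sum_add_distrib, sum_tilt_mul_logRatio h₁ h₂]

lemma kl_tilt_right_sub_left [Nonempty α] (h₁ : ∀ x, 0 < P₁ x) (h₂ : ∀ x, 0 < P₂ x) (l : ℝ) :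
    kl (tilt P₁ P₂ l) P₂ - kl (tilt P₁ P₂ l) P₁ = tiltedMean P₁ (logRatio P₁ P₂) l := by
  rw [kl_tilt_right h₁ h₂, add_sub_cancel_left]

end TiltedFamily

section Monotonicity

variable {α : Type*} [Fintype α] [Nonempty α] {P₁ P₂ : α → ℝ}

lemma hasDerivAt_kl_tilt_left (h₁ : ∀ x, 0 < P₁ x) (h₂ : ∀ x, 0 < P₂ x) (l : ℝ) :
    HasDerivAt (fun t => kl (tilt P₁ P₂ t) P₁) (l * tiltedVar P₁ (logRatio P₁ P₂) l) l := by
  simp only [kl_tilt_left h₁ h₂]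
  have hZ := (tiltedMoment_zero_pos (g := logRatio P₁ P₂) h₁ l).ne'
  refine (((hasDerivAt_id l).mul (hasDerivAt_tiltedMean h₁ l)).neg.sub
    ((hasDerivAt_tiltedMoment 0 l).log hZ)).congr_deriv ?_
  simp only [tiltedMean, id, zero_add]
  ring

lemma hasDerivAt_kl_tilt_right (h₁ : ∀ x, 0 < P₁ x) (h₂ : ∀ x, 0 < P₂ x) (l : ℝ) :
    HasDerivAt (fun t => kl (tilt P₁ P₂ t) P₂)
      (-((1 - l) * tiltedVar P₁ (logRatio P₁ P₂) l)) l := by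
  simp only [kl_tilt_right h₁ h₂]
  exact ((hasDerivAt_kl_tilt_left h₁ h₂ l).add (hasDerivAt_tiltedMean h₁ l)).congr_deriv
    (by ring)

lemma continuous_kl_tilt_left (h₁ : ∀ x, 0 < P₁ x) (h₂ : ∀ x, 0 < P₂ x) :
    Continuous fun l => kl (tilt P₁ P₂ l) P₁ :=
  continuous_iff_continuousAt.2 fun l => (hasDerivAt_kl_tilt_left h₁ h₂ l).continuousAt

lemma continuous_kl_tilt_right (h₁ : ∀ x, 0 < P₁ x) (h₂ : ∀ x, 0 < P₂ x) :
    Continuous fun l => kl (tilt P₁ P₂ l) P₂ :=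
  continuous_iff_continuousAt.2 fun l => (hasDerivAt_kl_tilt_right h₁ h₂ l).continuousAt

lemma strictMonoOn_kl_tilt_left (h₁ : ∀ x, 0 < P₁ x) (h₂ : ∀ x, 0 < P₂ x)
    (hne : ∃ x y, logRatio P₁ P₂ x ≠ logRatio P₁ P₂ y) :
    StrictMonoOn (fun l => kl (tilt P₁ P₂ l) P₁) (Set.Ici 0) := by
  refine strictMonoOn_of_deriv_pos (convex_Ici 0) (continuous_kl_tilt_left h₁ h₂).continuousOn
    fun l hl => ?_
  rw [interior_Ici] at hl
  rw [(hasDerivAt_kl_tilt_left h₁ h₂ l).deriv]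
  exact mul_pos hl (tiltedVar_pos h₁ hne l)

lemma strictAntiOn_kl_tilt_right (h₁ : ∀ x, 0 < P₁ x) (h₂ : ∀ x, 0 < P₂ x)
    (hne : ∃ x y, logRatio P₁ P₂ x ≠ logRatio P₁ P₂ y) :
    StrictAntiOn (fun l => kl (tilt P₁ P₂ l) P₂) (Set.Iic 1) := by
  refine strictAntiOn_of_deriv_neg (convex_Iic 1) (continuous_kl_tilt_right h₁ h₂).continuousOn
    fun l hl => ?_
  rw [interior_Iic] at hl
  rw [(hasDerivAt_kl_tilt_right h₁ h₂ l).deriv, neg_lt_zero]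
  exact mul_pos (sub_pos.2 hl) (tiltedVar_pos h₁ hne l)

lemma E1exp_le (h₁ : ∀ x, 0 < P₁ x) (h₂ : ∀ x, 0 < P₂ x) (h₁sum : ∑ x, P₁ x = 1)
    (hne : ∃ x y, logRatio P₁ P₂ x ≠ logRatio P₁ P₂ y) {γ l₁ : ℝ} (hl₁ : l₁ ∈ Set.Icc 0 1)
    (hγ : kl (tilt P₁ P₂ l₁) P₂ ≤ γ) :
    E1exp P₁ P₂ γ ≤ kl (tilt P₁ P₂ l₁) P₁ := by
  have hmono := strictMonoOn_kl_tilt_left h₁ h₂ hne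
  refine Real.sSup_le ?_ ?_
  · rintro _ ⟨l, hl, hγl, rfl⟩
    have hll₁ : l ≤ l₁ :=
      ((strictAntiOn_kl_tilt_right h₁ h₂ hne).le_iff_ge hl₁.2 hl.2).1 (hγ.trans hγl)
    exact hmono.monotoneOn hl.1 hl₁.1 hll₁
  · simpa [kl_tilt_zero_left h₁sum] using hmono.monotoneOn Set.self_mem_Ici hl₁.1 hl₁.1

lemma E2exp_le (h₁ : ∀ x, 0 < P₁ x) (h₂ : ∀ x, 0 < P₂ x) (h₂sum : ∑ x, P₂ x = 1)
    (hne : ∃ x y, logRatio P₁ P₂ x ≠ logRatio P₁ P₂ y) {γ l₂ : ℝ} (hl₂ : l₂ ∈ Set.Icc 0 1)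
    (hγ : kl (tilt P₁ P₂ l₂) P₁ ≤ γ) :
    E2exp P₁ P₂ γ ≤ kl (tilt P₁ P₂ l₂) P₂ := by
  have hanti := strictAntiOn_kl_tilt_right h₁ h₂ hne
  refine Real.sSup_le ?_ ?_
  · rintro _ ⟨l, hl, hγl, rfl⟩
    have hl₂l : l₂ ≤ l :=
      ((strictMonoOn_kl_tilt_left h₁ h₂ hne).le_iff_le hl₂.1 hl.1).1 (hγ.trans hγl)
    exact hanti.antitoneOn hl₂.2 hl.2 hl₂l
  · simpa [kl_tilt_one_right h₂sum] using hanti.antitoneOn hl₂.2 Set.self_mem_Iic hl₂.2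

end Monotonicity

section Chernoff

variable {α : Type*} [Fintype α]

lemma prodProb_mono {P : α → ℝ} (hP : ∀ x, 0 ≤ P x) {N : ℕ} {A B : Set (Fin N → α)}
    (h : A ⊆ B) : prodProb P A ≤ prodProb P B :=
  Finset.sum_le_sum fun ω _ => Set.indicator_le_indicator_of_subset h
    (fun ω' => Finset.prod_nonneg fun i _ => hP (ω' i)) ω

lemma prodProb_union_le {P : α → ℝ} (hP : ∀ x, 0 ≤ P x) {N : ℕ} (A B : Set (Fin N → α)) :
    prodProb P (A ∪ B) ≤ prodProb P A + prodProb P B := by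
  rw [prodProb, prodProb, prodProb, ← Finset.sum_add_distrib]
  refine Finset.sum_le_sum fun ω _ => ?_
  have hω : 0 ≤ ∏ i, P (ω i) := Finset.prod_nonneg fun i _ => hP (ω i)
  by_cases hA : ω ∈ A <;> by_cases hB : ω ∈ B <;> simp [Set.indicator, hA, hB, hω]

lemma prodProb_le_exp_mul_prod_sum {P : α → ℝ} (hP : ∀ x, 0 ≤ P x) {N : ℕ} (θ : Fin N → ℝ)
    (g : α → ℝ) (C : ℝ) {E : Set (Fin N → α)} (hE : ∀ ω ∈ E, 0 ≤ ∑ i, θ i * g (ω i) + C) :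
    prodProb P E ≤ exp C * ∏ i, ∑ x, P x * exp (θ i * g x) := by
  have hprod : ∀ ω : Fin N → α, 0 ≤ ∏ i, P (ω i) := fun ω => Finset.prod_nonneg fun i _ => hP _
  calc prodProb P E
      ≤ ∑ ω : Fin N → α, exp (∑ i, θ i * g (ω i) + C) * ∏ i, P (ω i) :=
        Finset.sum_le_sum fun ω _ => Set.indicator_apply_le'
          (fun hω => le_mul_of_one_le_left (hprod ω) (one_le_exp (hE ω hω)))
          (fun _ => mul_nonneg (exp_pos _).le (hprod ω))
    _ = exp C * ∏ i, ∑ x, P x * exp (θ i * g x) := by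
        rw [Fintype.prod_sum, Finset.mul_sum]
        refine Finset.sum_congr rfl fun ω _ => ?_
        rw [exp_add, exp_sum, Finset.prod_mul_distrib]
        ring

variable {P₁ P₂ : α → ℝ}

lemma prodProb_le_of_blocks {P : α → ℝ} (hP : ∀ x, 0 ≤ P x) (n k : ℕ) (u₁ u₂ C : ℝ)
    {E : Set (Fin ((k + 1) * n) → α)}
    (hE : ∀ ω ∈ E, 0 ≤ u₁ * S1 P₁ P₂ n ω + u₂ * S2 P₁ P₂ n ω + C) :
    prodProb P E ≤ exp C * (∑ x, P x * exp (u₁ * logRatio P₁ P₂ x)) ^ n *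
      (∑ x, P x * exp (u₂ * logRatio P₁ P₂ x)) ^ (k * n) := by
  set θ : Fin ((k + 1) * n) → ℝ := fun i => if (i : ℕ) < n then u₁ else u₂
  have hS : ∀ ω : Fin ((k + 1) * n) → α,
      u₁ * S1 P₁ P₂ n ω + u₂ * S2 P₁ P₂ n ω = ∑ i, θ i * logRatio P₁ P₂ (ω i) := fun ω => by
    simp only [θ, ite_mul, Finset.sum_ite, S1, S2, Finset.mul_sum, not_lt, logRatio]
  have hcard : #{i : Fin ((k + 1) * n) | (i : ℕ) < n} = n := by
    rw [Fin.card_filter_val_lt, min_eq_right (by nlinarith)]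
  have hcard' : #{i : Fin ((k + 1) * n) | ¬ (i : ℕ) < n} = k * n := by
    have := Finset.card_filter_add_card_filter_not (s := univ)
      fun i : Fin ((k + 1) * n) => (i : ℕ) < n
    rw [hcard, card_univ, Fintype.card_fin] at this
    linarith
  have hθ : ∀ i, ∑ x, P x * exp (θ i * logRatio P₁ P₂ x) = if (i : ℕ) < n
      then ∑ x, P x * exp (u₁ * logRatio P₁ P₂ x) else ∑ x, P x * exp (u₂ * logRatio P₁ P₂ x) :=
    fun i => by split_ifs with h <;> simp [θ, h]
  calc prodProb P E ≤ exp C * ∏ i, ∑ x, P x * exp (θ i * logRatio P₁ P₂ x) :=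
        prodProb_le_exp_mul_prod_sum hP θ _ C fun ω hω => hS ω ▸ hE ω hω
    _ = _ := by
        rw [Fintype.prod_congr _ _ hθ, Finset.prod_ite, prod_const, prod_const, hcard, hcard',
          mul_assoc]

end Chernoff

section TwoPhaseEvents

variable {α : Type*} {P₁ P₂ : α → ℝ}

lemma twoPhaseA2_subset {n k : ℕ} (hn : 0 < n) (hk : 0 < k) (a₁ b₁ a : ℝ) :
    twoPhaseA2 P₁ P₂ k n a₁ b₁ a ⊆ {ω | S1 P₁ P₂ n ω ≤ n * b₁} ∪
      {ω | S1 P₁ P₂ n ω ≤ n * a₁ ∧ S2 P₁ P₂ n ω ≤ k * n * a} := by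
  have hn' : (0 : ℝ) < n := by exact_mod_cast hn
  have hkn : (0 : ℝ) < k * n := mul_pos (by exact_mod_cast hk) hn'
  rintro ω (h | ⟨-, hS1, hS2⟩)
  · exact Or.inl ((div_le_iff₀' hn').1 h)
  · exact Or.inr ⟨((div_lt_iff₀' hn').1 hS1).le, ((div_lt_iff₀' hkn).1 hS2).le⟩

lemma twoPhaseA1_subset {n k : ℕ} (hn : 0 < n) (hk : 0 < k) (a₁ b₁ a : ℝ) :
    twoPhaseA1 P₁ P₂ k n a₁ b₁ a ⊆ {ω | n * a₁ ≤ S1 P₁ P₂ n ω} ∪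
      {ω | n * b₁ ≤ S1 P₁ P₂ n ω ∧ k * n * a ≤ S2 P₁ P₂ n ω} := by
  have hn' : (0 : ℝ) < n := by exact_mod_cast hn
  have hkn : (0 : ℝ) < k * n := mul_pos (by exact_mod_cast hk) hn'
  rintro ω (h | ⟨hS1, -, hS2⟩)
  · exact Or.inl ((le_div_iff₀' hn').1 h)
  · exact Or.inr ⟨((lt_div_iff₀' hn').1 hS1).le, (le_div_iff₀' hkn).1 hS2⟩

end TwoPhaseEvents

section ErrorBounds

variable {α : Type*} [Fintype α] {P₁ P₂ : α → ℝ}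

lemma sum_mul_exp_logRatio_left (l : ℝ) :
    ∑ x, P₁ x * exp (-l * logRatio P₁ P₂ x) = tiltedMoment P₁ (logRatio P₁ P₂) 0 l := by
  simp [tiltedMoment_zero, neg_mul]

lemma sum_mul_exp_logRatio_right (h₁ : ∀ x, 0 < P₁ x) (h₂ : ∀ x, 0 < P₂ x) (l : ℝ) :
    ∑ x, P₂ x * exp ((1 - l) * logRatio P₁ P₂ x) = tiltedMoment P₁ (logRatio P₁ P₂) 0 l := by
  rw [tiltedMoment_zero]
  refine Finset.sum_congr rfl fun x _ => ?_
  rw [sub_mul, one_mul, sub_eq_add_neg, exp_add, logRatio, exp_log (div_pos (h₁ x) (h₂ x)),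
    ← mul_assoc, mul_div_cancel₀ _ (h₂ x).ne']

lemma prodProb_le_exp_kl_left [Nonempty α] (h₁ : ∀ x, 0 < P₁ x) (h₂ : ∀ x, 0 < P₂ x)
    (n k : ℕ) (l lam : ℝ) {E : Set (Fin ((k + 1) * n) → α)}
    (hE : ∀ ω ∈ E, l * S1 P₁ P₂ n ω + lam * S2 P₁ P₂ n ω ≤
      n * (l * tiltedMean P₁ (logRatio P₁ P₂) l) +
        k * n * (lam * tiltedMean P₁ (logRatio P₁ P₂) lam)) :
    prodProb P₁ E ≤
      exp (-(n * kl (tilt P₁ P₂ l) P₁ + k * n * kl (tilt P₁ P₂ lam) P₁)) := by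
  refine (prodProb_le_of_blocks (P₁ := P₁) (P₂ := P₂) (fun x => (h₁ x).le) n k (-l) (-lam)
    (n * (l * tiltedMean P₁ (logRatio P₁ P₂) l) +
      k * n * (lam * tiltedMean P₁ (logRatio P₁ P₂) lam))
    fun ω hω => by linarith [hE ω hω]).trans_eq ?_
  rw [sum_mul_exp_logRatio_left, sum_mul_exp_logRatio_left,
    pow_eq_exp_mul_log (tiltedMoment_zero_pos h₁ l),
    pow_eq_exp_mul_log (tiltedMoment_zero_pos h₁ lam),
    ← exp_add, ← exp_add, kl_tilt_left h₁ h₂, kl_tilt_left h₁ h₂]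
  congr 1
  push_cast
  ring

lemma prodProb_le_exp_kl_right [Nonempty α] (h₁ : ∀ x, 0 < P₁ x) (h₂ : ∀ x, 0 < P₂ x)
    (n k : ℕ) (l lam : ℝ) {E : Set (Fin ((k + 1) * n) → α)}
    (hE : ∀ ω ∈ E, n * ((1 - l) * tiltedMean P₁ (logRatio P₁ P₂) l) +
        k * n * ((1 - lam) * tiltedMean P₁ (logRatio P₁ P₂) lam) ≤
      (1 - l) * S1 P₁ P₂ n ω + (1 - lam) * S2 P₁ P₂ n ω) :
    prodProb P₂ E ≤
      exp (-(n * kl (tilt P₁ P₂ l) P₂ + k * n * kl (tilt P₁ P₂ lam) P₂)) := by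
  refine (prodProb_le_of_blocks (P₁ := P₁) (P₂ := P₂) (fun x => (h₂ x).le) n k (1 - l) (1 - lam)
    (-(n * ((1 - l) * tiltedMean P₁ (logRatio P₁ P₂) l) +
      k * n * ((1 - lam) * tiltedMean P₁ (logRatio P₁ P₂) lam)))
    fun ω hω => by linarith [hE ω hω]).trans_eq ?_
  rw [sum_mul_exp_logRatio_right h₁ h₂, sum_mul_exp_logRatio_right h₁ h₂,
    pow_eq_exp_mul_log (tiltedMoment_zero_pos h₁ l),
    pow_eq_exp_mul_log (tiltedMoment_zero_pos h₁ lam),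
    ← exp_add, ← exp_add,
    kl_tilt_right h₁ h₂, kl_tilt_right h₁ h₂, kl_tilt_left h₁ h₂, kl_tilt_left h₁ h₂]
  congr 1
  push_cast
  ring

variable [Nonempty α]

lemma prodProb_twoPhaseA2_le (h₁ : ∀ x, 0 < P₁ x) (h₂ : ∀ x, 0 < P₂ x)
    (h₁sum : ∑ x, P₁ x = 1) {n k : ℕ} (hn : 0 < n) (hk : 0 < k) {l₁ l₂ lam : ℝ}
    (hl₁ : 0 ≤ l₁) (hl₂ : 0 ≤ l₂) (hlam : 0 ≤ lam) :
    prodProb P₁ (twoPhaseA2 P₁ P₂ k n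
        (kl (tilt P₁ P₂ l₂) P₂ - kl (tilt P₁ P₂ l₂) P₁)
        (kl (tilt P₁ P₂ l₁) P₂ - kl (tilt P₁ P₂ l₁) P₁)
        (kl (tilt P₁ P₂ lam) P₂ - kl (tilt P₁ P₂ lam) P₁)) ≤
      exp (-(n * kl (tilt P₁ P₂ l₁) P₁)) +
        exp (-(n * kl (tilt P₁ P₂ l₂) P₁ + k * n * kl (tilt P₁ P₂ lam) P₁)) := by
  have hP : ∀ x, 0 ≤ P₁ x := fun x => (h₁ x).le
  simp only [kl_tilt_right_sub_left h₁ h₂]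
  refine (prodProb_mono hP (twoPhaseA2_subset hn hk _ _ _)).trans <|
    (prodProb_union_le hP _ _).trans (add_le_add ?_ ?_)
  · simpa [kl_tilt_zero_left h₁sum] using prodProb_le_exp_kl_left h₁ h₂ n k l₁ 0
      (E := {ω | S1 P₁ P₂ n ω ≤ n * tiltedMean P₁ (logRatio P₁ P₂) l₁})
      fun ω hω => by nlinarith [mul_le_mul_of_nonneg_left hω hl₁]
  · exact prodProb_le_exp_kl_left h₁ h₂ n k l₂ lam fun ω ⟨hS1, hS2⟩ => by
      nlinarith [mul_le_mul_of_nonneg_left hS1 hl₂, mul_le_mul_of_nonneg_left hS2 hlam]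

lemma prodProb_twoPhaseA1_le (h₁ : ∀ x, 0 < P₁ x) (h₂ : ∀ x, 0 < P₂ x)
    (h₂sum : ∑ x, P₂ x = 1) {n k : ℕ} (hn : 0 < n) (hk : 0 < k) {l₁ l₂ lam : ℝ}
    (hl₁ : l₁ ≤ 1) (hl₂ : l₂ ≤ 1) (hlam : lam ≤ 1) :
    prodProb P₂ (twoPhaseA1 P₁ P₂ k n
        (kl (tilt P₁ P₂ l₂) P₂ - kl (tilt P₁ P₂ l₂) P₁)
        (kl (tilt P₁ P₂ l₁) P₂ - kl (tilt P₁ P₂ l₁) P₁)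
        (kl (tilt P₁ P₂ lam) P₂ - kl (tilt P₁ P₂ lam) P₁)) ≤
      exp (-(n * kl (tilt P₁ P₂ l₂) P₂)) +
        exp (-(n * kl (tilt P₁ P₂ l₁) P₂ + k * n * kl (tilt P₁ P₂ lam) P₂)) := by
  have hP : ∀ x, 0 ≤ P₂ x := fun x => (h₂ x).le
  simp only [kl_tilt_right_sub_left h₁ h₂]
  refine (prodProb_mono hP (twoPhaseA1_subset hn hk _ _ _)).trans <|
    (prodProb_union_le hP _ _).trans (add_le_add ?_ ?_)
  · simpa [kl_tilt_one_right h₂sum] using prodProb_le_exp_kl_right h₁ h₂ n k l₂ 1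
      (E := {ω | n * tiltedMean P₁ (logRatio P₁ P₂) l₂ ≤ S1 P₁ P₂ n ω})
      fun ω hω => by nlinarith [mul_le_mul_of_nonneg_left hω (sub_nonneg.2 hl₂)]
  · exact prodProb_le_exp_kl_right h₁ h₂ n k l₁ lam fun ω ⟨hS1, hS2⟩ => by
      nlinarith [mul_le_mul_of_nonneg_left hS1 (sub_nonneg.2 hl₁),
        mul_le_mul_of_nonneg_left hS2 (sub_nonneg.2 hlam)]

end ErrorBounds

lemma exp_neg_add_exp_neg_le {a b E δ n : ℝ} (hlog : log 2 ≤ δ * n) (ha : E * n ≤ a)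
    (hb : E * n ≤ b) : exp (-a) + exp (-b) ≤ exp (-((E - δ) * n)) :=
  calc exp (-a) + exp (-b) ≤ exp (log 2 + -(E * n)) := by
        rw [exp_add, exp_log two_pos]
        linarith [exp_le_exp.2 (neg_le_neg ha), exp_le_exp.2 (neg_le_neg hb)]
    _ ≤ exp (-((E - δ) * n)) := exp_le_exp.2 (by linarith)

/-- Proposition 1 (achievability of the two-phase region): every pair in
`([0,E₁(γ)] × [0,E₂(γ)]) ∩ ((γ,γ) + k·R_FD)` is achievable by two-phase tests. -/
theorem twoPhase_achievability (P₁ P₂ : 𝒳 → ℝ)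
    (h1pos : ∀ x, 0 < P₁ x) (h2pos : ∀ x, 0 < P₂ x)
    (h1sum : ∑ x, P₁ x = 1) (h2sum : ∑ x, P₂ x = 1)
    (hne : P₁ ≠ P₂)
    (ls : ℝ) (hls : ls ∈ Set.Icc (0:ℝ) 1)
    (hchern : kl (tilt P₁ P₂ ls) P₁ = kl (tilt P₁ P₂ ls) P₂)
    (γ : ℝ) (hγ0 : 0 < γ) (hγD : γ < kl (tilt P₁ P₂ ls) P₁)
    (k : ℕ) (hk : 0 < k)
    (E₁ E₂ : ℝ)
    (hE : (E₁, E₂) ∈ (Set.Icc 0 (E1exp P₁ P₂ γ) ×ˢ Set.Icc 0 (E2exp P₁ P₂ γ)) ∩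
      {p : ℝ × ℝ | ∃ q ∈ RFD P₁ P₂, p = (γ + k * q.1, γ + k * q.2)}) :
    ∀ δ : ℝ, 0 < δ → ∃ n₀ : ℕ, ∀ n : ℕ, n₀ ≤ n →
      ∃ l₁ ∈ Set.Icc (0:ℝ) 1, ∃ l₂ ∈ Set.Icc (0:ℝ) 1, ∃ lam ∈ Set.Icc (0:ℝ) 1,
        l₂ ≤ l₁ ∧
        min (kl (tilt P₁ P₂ l₁) P₂) (kl (tilt P₁ P₂ l₂) P₁) = γ ∧
        prodProb P₁ (twoPhaseA2 P₁ P₂ k n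
            (kl (tilt P₁ P₂ l₂) P₂ - kl (tilt P₁ P₂ l₂) P₁)
            (kl (tilt P₁ P₂ l₁) P₂ - kl (tilt P₁ P₂ l₁) P₁)
            (kl (tilt P₁ P₂ lam) P₂ - kl (tilt P₁ P₂ lam) P₁))
          ≤ Real.exp (-((E₁ - δ) * n)) ∧
        prodProb P₂ (twoPhaseA1 P₁ P₂ k n
            (kl (tilt P₁ P₂ l₂) P₂ - kl (tilt P₁ P₂ l₂) P₁)
            (kl (tilt P₁ P₂ l₁) P₂ - kl (tilt P₁ P₂ l₁) P₁)
            (kl (tilt P₁ P₂ lam) P₂ - kl (tilt P₁ P₂ lam) P₁))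
          ≤ Real.exp (-((E₂ - δ) * n)) := by
  obtain ⟨⟨hE₁, hE₂⟩, q, ⟨-, -, lam, hlam, hq₁, hq₂⟩, hq⟩ := hE
  obtain ⟨rfl, rfl⟩ := Prod.mk.inj hq
  have hllr := exists_logRatio_ne h1pos h2pos h1sum h2sum hne
  obtain ⟨l₂, hl₂, hγ₂ : kl (tilt P₁ P₂ l₂) P₁ = γ⟩ :=
    intermediate_value_Icc hls.1 (continuous_kl_tilt_left h1pos h2pos).continuousOn
      ⟨(kl_tilt_zero_left h1sum).trans_le hγ0.le, hγD.le⟩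
  obtain ⟨l₁, hl₁, hγ₁ : kl (tilt P₁ P₂ l₁) P₂ = γ⟩ :=
    intermediate_value_Icc' hls.2 (continuous_kl_tilt_right h1pos h2pos).continuousOn
      ⟨(kl_tilt_one_right h2sum).trans_le hγ0.le, (hchern ▸ hγD).le⟩
  have hl₁' : l₁ ∈ Set.Icc (0 : ℝ) 1 := ⟨hls.1.trans hl₁.1, hl₁.2⟩
  have hl₂' : l₂ ∈ Set.Icc (0 : ℝ) 1 := ⟨hl₂.1, hl₂.2.trans hls.2⟩
  have hE₁' := hE₁.2.trans (E1exp_le h1pos h2pos h1sum hllr hl₁' hγ₁.le)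
  have hE₂' := hE₂.2.trans (E2exp_le h1pos h2pos h2sum hllr hl₂' hγ₂.le)
  intro δ hδ
  refine ⟨⌈log 2 / δ⌉₊ + 1, fun n hn => ?_⟩
  have hn₀ : 0 < n := by omega
  have hlog : log 2 ≤ δ * n := (div_le_iff₀' hδ).1
    ((Nat.le_ceil _).trans (by exact_mod_cast (Nat.le_succ _).trans hn))
  have hkn : (0 : ℝ) ≤ k * n := by positivity
  refine ⟨l₁, hl₁', l₂, hl₂', lam, hlam, hl₂.2.trans hl₁.1, by rw [hγ₁, hγ₂, min_self], ?_, ?_⟩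
  · refine (prodProb_twoPhaseA2_le h1pos h2pos h1sum hn₀ hk hl₁'.1 hl₂'.1 hlam.1).trans
      (exp_neg_add_exp_neg_le hlog (by nlinarith) ?_)
    rw [hγ₂]
    nlinarith [mul_le_mul_of_nonneg_left hq₁ hkn]
  · refine (prodProb_twoPhaseA1_le h1pos h2pos h2sum hn₀ hk hl₁'.2 hl₂'.2 hlam.2).trans
      (exp_neg_add_exp_neg_le hlog (by nlinarith) ?_)
    rw [hγ₁]
    nlinarith [mul_le_mul_of_nonneg_left hq₂ hkn]
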